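/- arXiv:2207.06648 — 2 statements merged into one kernel-verified Lean document; each statement's English description precedes it below -/
import Mathlib

section
/- (Well-definedness of the shadowing contribution.) Let ρ be a φ-invariant ergodic Borel probability measure on K. Let ω be a continuous covector field on K and ψ : K → ℝ a continuous function such that along every orbit x_t in K, t ↦ ψ(x_t) is differentiable with d/dt ψ(x_t) = ω(x_t)(F(x_t)). Let X be a continuous vector field on K, and let (v₁, η₁) and (v₂, η₂) be two shadowing pairs for X. Then ∫_K ω(x)(v₁(x)) dρ − ∫_K η₁(x) ψ(x) dρ = ∫_K ω(x)(v₂(x)) dρ − ∫_K η₂(x) ψ(x) dρ; that is, all shadowing pairs of X give the same product ⟪S(X); ω, ψ⟫ := ρ(ω(v)) − ρ(ηψ). -/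
open Function Set Filter MeasureTheory Topology Metric

/-!
The difference `w = v₁ - v₂`, `ζ = η₁ - η₂` of two shadowing pairs solves the homogeneous equation
`w' = DF w - ζ F` along orbits, so `Dφᵗ (w x)` and `w (φᵗ x)` differ by a multiple of `F (φᵗ x)`.
As `w` is bounded, the unstable component of `w x` stays bounded in forward time and the stable one
in backward time, which hyperbolicity forbids unless both vanish. Hence `w = a • F` with `a`
continuous and `a' = -ζ` along orbits, so `ω(w) - ζψ` is the derivative of `aψ` along the flow,
and the integral of such a derivative against an invariant measure is zero.
-/

structure IsC1Flow {E : Type*} [NormedAddCommGroup E] [NormedSpace ℝ E]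
    (F : E → E) (φ : ℝ → E → E) : Prop where
  zero : ∀ x, φ 0 x = x
  add : ∀ s t x, φ (s + t) x = φ s (φ t x)
  hasDerivAt : ∀ x t, HasDerivAt (fun s => φ s x) (F (φ t x)) t
  contDiff : ∀ t, ContDiff ℝ 1 (φ t)
  continuous_fderiv : Continuous fun p : ℝ × E => fderiv ℝ (φ p.1) p.2

namespace IsC1Flow

variable {E : Type*} [NormedAddCommGroup E] [NormedSpace ℝ E] {F : E → E} {φ : ℝ → E → E}

theorem continuous_orbit (hφ : IsC1Flow F φ) (x : E) : Continuous fun t => φ t x :=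
  continuous_iff_continuousAt.2 fun t => (hφ.hasDerivAt x t).continuousAt

theorem differentiable (hφ : IsC1Flow F φ) (t : ℝ) : Differentiable ℝ (φ t) :=
  (hφ.contDiff t).differentiable one_ne_zero

theorem fderiv_apply_fderiv_of_add_eq_zero (hφ : IsC1Flow F φ) {s t : ℝ} (hst : s + t = 0)
    (x u : E) : fderiv ℝ (φ s) (φ t x) (fderiv ℝ (φ t) x u) = u := by
  have hcomp : φ s ∘ φ t = id := funext fun y => by rw [comp_apply, ← hφ.add, hst, hφ.zero, id]
  rw [← ContinuousLinearMap.comp_apply,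
    ← fderiv_comp x (hφ.differentiable s (φ t x)) (hφ.differentiable t x), hcomp, fderiv_id,
    ContinuousLinearMap.id_apply]

theorem fderiv_apply_vectorField (hφ : IsC1Flow F φ) (t : ℝ) (x : E) :
    fderiv ℝ (φ t) x (F x) = F (φ t x) := by
  have hleft : HasDerivAt (fun s => φ t (φ s x)) (fderiv ℝ (φ t) x (F x)) 0 := by
    simpa only [hφ.zero x, comp_def] using
      (hφ.differentiable t (φ 0 x)).hasFDerivAt.comp_hasDerivAt 0 (hφ.hasDerivAt x 0)
  have hright : HasDerivAt (fun s => φ t (φ s x)) (F (φ t x)) 0 := by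
    simpa only [← hφ.add, add_zero, comp_def, one_smul] using
      (hφ.hasDerivAt x (t + 0)).scomp 0 ((hasDerivAt_id (0 : ℝ)).const_add t)
  exact hleft.unique hright

theorem continuous_uncurry [ProperSpace E] (hφ : IsC1Flow F φ) :
    Continuous fun p : ℝ × E => φ p.1 p.2 := by
  refine continuous_iff_continuousAt.2 fun ⟨t, x⟩ => ?_
  obtain ⟨D, hD⟩ := (isCompact_Icc.prod (isCompact_closedBall x 1)).exists_bound_of_continuousOn
    (s := Icc (t - 1) (t + 1) ×ˢ closedBall x 1) hφ.continuous_fderiv.continuousOn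
  have hcont : ContinuousOn (fun p : ℝ × E => φ p.1 p.2) (Icc (t - 1) (t + 1) ×ˢ closedBall x 1) :=
    continuousOn_prod_of_continuousOn_lipschitzOnWith' _ D.toNNReal
      (fun s hs => (convex_closedBall x 1).lipschitzOnWith_of_nnnorm_fderiv_le
        (fun y _ => hφ.differentiable s y) fun y hy => by
          rw [← NNReal.coe_le_coe, coe_nnnorm]
          exact (hD (s, y) ⟨hs, hy⟩).trans (Real.le_coe_toNNReal D))
      fun y _ => (hφ.continuous_orbit y).continuousOn
  exact hcont.continuousAt (prod_mem_nhds (Icc_mem_nhds (by linarith) (by linarith))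
    (closedBall_mem_nhds x one_pos))

theorem continuous_fderiv_comp_fderiv [ProperSpace E] (hφ : IsC1Flow F φ) (hF : ContDiff ℝ 1 F) :
    Continuous fun p : ℝ × E => (fderiv ℝ F (φ p.1 p.2)).comp (fderiv ℝ (φ p.1) p.2) :=
  ((hF.continuous_fderiv one_ne_zero).comp hφ.continuous_uncurry).clm_comp hφ.continuous_fderiv

theorem fderiv_eq_id_add_integral [ProperSpace E] (hφ : IsC1Flow F φ) (hF : ContDiff ℝ 1 F)
    (t : ℝ) (x : E) :
    fderiv ℝ (φ t) x = ContinuousLinearMap.id ℝ E +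
      ∫ s in (0 : ℝ)..t, (fderiv ℝ F (φ s x)).comp (fderiv ℝ (φ s) x) := by
  -- differentiate `φ t y - y = ∫ s in 0..t, F (φ s y)` under the integral sign
  have hA := hφ.continuous_fderiv_comp_fderiv hF
  obtain ⟨B, hB⟩ := (isCompact_uIcc.prod (isCompact_closedBall x 1)).exists_bound_of_continuousOn
    (s := uIcc 0 t ×ˢ closedBall x 1) hA.continuousOn
  have hFφ : ∀ y, Continuous fun s => F (φ s y) :=
    fun y => hF.continuous.comp (hφ.continuous_orbit y)
  have hint : HasFDerivAt (fun y => ∫ s in (0 : ℝ)..t, F (φ s y))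
      (∫ s in (0 : ℝ)..t, (fderiv ℝ F (φ s x)).comp (fderiv ℝ (φ s) x)) x :=
    intervalIntegral.hasFDerivAt_integral_of_dominated_of_fderiv_le (bound := fun _ => B)
      (ball_mem_nhds x one_pos) (.of_forall fun y => (hFφ y).aestronglyMeasurable)
      ((hFφ x).intervalIntegrable 0 t) (hA.comp (Continuous.prodMk_left x)).aestronglyMeasurable
      (.of_forall fun s hs y hy => hB (s, y) ⟨uIoc_subset_uIcc hs, ball_subset_closedBall hy⟩)
      intervalIntegrable_const
      (.of_forall fun s _ y _ => (hF.differentiable one_ne_zero _).hasFDerivAt.comp y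
        (hφ.differentiable s y).hasFDerivAt)
  have hFTC : (fun y => ∫ s in (0 : ℝ)..t, F (φ s y)) = fun y => φ t y - y := funext fun y => by
    rw [intervalIntegral.integral_eq_sub_of_hasDerivAt (fun s _ => hφ.hasDerivAt y s)
      ((hFφ y).intervalIntegrable 0 t), hφ.zero]
  rw [hFTC] at hint
  have h : HasFDerivAt (φ t) ((∫ s in (0 : ℝ)..t, (fderiv ℝ F (φ s x)).comp (fderiv ℝ (φ s) x)) +
      ContinuousLinearMap.id ℝ E) x := by
    convert hint.add (hasFDerivAt_id x) using 1
    ext y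
    simp
  exact h.fderiv.trans (add_comm _ _)

theorem hasDerivAt_fderiv [ProperSpace E] (hφ : IsC1Flow F φ) (hF : ContDiff ℝ 1 F) (x : E)
    (t : ℝ) :
    HasDerivAt (fun τ => fderiv ℝ (φ τ) x) ((fderiv ℝ F (φ t x)).comp (fderiv ℝ (φ t) x)) t := by
  have hc : Continuous fun s => (fderiv ℝ F (φ s x)).comp (fderiv ℝ (φ s) x) :=
    (hφ.continuous_fderiv_comp_fderiv hF).comp (Continuous.prodMk_left x)
  rw [show (fun τ => fderiv ℝ (φ τ) x) = fun τ => ContinuousLinearMap.id ℝ E +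
      ∫ s in (0 : ℝ)..τ, (fderiv ℝ F (φ s x)).comp (fderiv ℝ (φ s) x) from
    funext fun τ => hφ.fderiv_eq_id_add_integral hF τ x]
  exact (intervalIntegral.integral_hasDerivAt_right (hc.intervalIntegrable 0 t)
    (hc.stronglyMeasurableAtFilter _ _) hc.continuousAt).const_add _

theorem eq_fderiv_apply_of_hasDerivAt [ProperSpace E] (hφ : IsC1Flow F φ) (hF : ContDiff ℝ 1 F)
    {x : E} {y : ℝ → E} (hy : ∀ t, HasDerivAt y (fderiv ℝ F (φ t x) (y t)) t) (t : ℝ) :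
    y t = fderiv ℝ (φ t) x (y 0) := by
  set r := |t| + 1 with hr
  obtain ⟨L, hL⟩ := isCompact_Icc.exists_bound_of_continuousOn (s := Icc (-r) r)
    ((hF.continuous_fderiv one_ne_zero).comp (hφ.continuous_orbit x)).continuousOn
  have hlip : ∀ s ∈ Ioo (-r) r, LipschitzOnWith L.toNNReal (fderiv ℝ F (φ s x)) univ :=
    fun s hs => by
    refine lipschitzOnWith_univ.2 ((fderiv ℝ F (φ s x)).lipschitz.weaken ?_)
    rw [← NNReal.coe_le_coe, coe_nnnorm]
    exact (hL s (Ioo_subset_Icc_self hs)).trans (Real.le_coe_toNNReal L)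
  have hsol : ∀ s, HasDerivAt (fun τ => fderiv ℝ (φ τ) x (y 0))
      (fderiv ℝ F (φ s x) (fderiv ℝ (φ s) x (y 0))) s := fun s => by
    simpa using (hφ.hasDerivAt_fderiv hF x s).clm_apply (hasDerivAt_const s (y 0))
  refine ODE_solution_unique_of_mem_Ioo hlip (t₀ := 0)
    ⟨by linarith [abs_nonneg t], by linarith [abs_nonneg t]⟩ (fun s _ => ⟨hy s, mem_univ _⟩)
    (fun s _ => ⟨hsol s, mem_univ _⟩) ?_
    ⟨by linarith [neg_abs_le t], by linarith [le_abs_self t]⟩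
  simp [funext hφ.zero]

theorem add_integral_smul_eq_fderiv_apply [ProperSpace E] (hφ : IsC1Flow F φ)
    (hF : ContDiff ℝ 1 F) {x : E} {w : E → E} {ζ : E → ℝ} (hζ : Continuous fun s => ζ (φ s x))
    (hw : ∀ t, HasDerivAt (fun s => w (φ s x))
      (fderiv ℝ F (φ t x) (w (φ t x)) - ζ (φ t x) • F (φ t x)) t) (t : ℝ) :
    w (φ t x) + (∫ s in (0 : ℝ)..t, ζ (φ s x)) • F (φ t x) = fderiv ℝ (φ t) x (w x) := by
  have hZ : ∀ τ, HasDerivAt (fun u => ∫ s in (0 : ℝ)..u, ζ (φ s x)) (ζ (φ τ x)) τ := fun τ =>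
    intervalIntegral.integral_hasDerivAt_right (hζ.intervalIntegrable 0 τ)
      (hζ.stronglyMeasurableAtFilter _ _) hζ.continuousAt
  have hFφ : ∀ τ, HasDerivAt (fun s => F (φ s x)) (fderiv ℝ F (φ τ x) (F (φ τ x))) τ := fun τ =>
    (hF.differentiable one_ne_zero _).hasFDerivAt.comp_hasDerivAt τ (hφ.hasDerivAt x τ)
  have hy : ∀ τ, HasDerivAt (fun u => w (φ u x) + (∫ s in (0 : ℝ)..u, ζ (φ s x)) • F (φ u x))
      (fderiv ℝ F (φ τ x) (w (φ τ x) + (∫ s in (0 : ℝ)..τ, ζ (φ s x)) • F (φ τ x))) τ := by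
    intro τ
    refine ((hw τ).add ((hZ τ).smul (hFφ τ))).congr_deriv ?_
    simp only [map_add, map_smul]
    abel
  simpa [hφ.zero] using hφ.eq_fderiv_apply_of_hasDerivAt hF hy t

theorem fderiv_apply_sub_mem_span [ProperSpace E] (hφ : IsC1Flow F φ) (hF : ContDiff ℝ 1 F)
    {x : E} {w : E → E} {ζ : E → ℝ} (hζ : Continuous fun s => ζ (φ s x))
    (hw : ∀ t, HasDerivAt (fun s => w (φ s x))
      (fderiv ℝ F (φ t x) (w (φ t x)) - ζ (φ t x) • F (φ t x)) t) (t : ℝ) :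
    fderiv ℝ (φ t) x (w x) - w (φ t x) ∈ Submodule.span ℝ {F (φ t x)} := by
  rw [← hφ.add_integral_smul_eq_fderiv_apply hF hζ hw t, add_sub_cancel_left]
  exact Submodule.smul_mem _ _ (Submodule.mem_span_singleton_self _)

theorem hasDerivAt_coeff_comp [ProperSpace E] (hφ : IsC1Flow F φ) (hF : ContDiff ℝ 1 F)
    {K : Set E} (hK : ∀ t, MapsTo (φ t) K K) (hF0 : ∀ x ∈ K, F x ≠ 0) {w : E → E} {ζ a : E → ℝ}
    (hζ : ContinuousOn ζ K)
    (hw : ∀ x ∈ K, ∀ t, HasDerivAt (fun s => w (φ s x))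
      (fderiv ℝ F (φ t x) (w (φ t x)) - ζ (φ t x) • F (φ t x)) t)
    (hwa : ∀ x ∈ K, w x = a x • F x) {x : E} (hx : x ∈ K) (t : ℝ) :
    HasDerivAt (fun s => a (φ s x)) (-ζ (φ t x)) t := by
  have hζx : Continuous fun s => ζ (φ s x) :=
    hζ.comp_continuous (hφ.continuous_orbit x) fun s => hK s hx
  have hcoeff : (fun s => a (φ s x)) = fun s => a x - ∫ u in (0 : ℝ)..s, ζ (φ u x) :=
    funext fun s => by
      have h := hφ.add_integral_smul_eq_fderiv_apply hF hζx (hw x hx) s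
      rw [hwa x hx, map_smul, hφ.fderiv_apply_vectorField, hwa _ (hK s hx), ← add_smul] at h
      linarith [smul_left_injective ℝ (hF0 _ (hK s hx)) h]
  rw [hcoeff]
  exact (intervalIntegral.integral_hasDerivAt_right (hζx.intervalIntegrable 0 t)
    (hζx.stronglyMeasurableAtFilter _ _) hζx.continuousAt).const_sub (a x)

end IsC1Flow

theorem exists_continuousOn_smul_eq_of_mem_span {X E : Type*} [TopologicalSpace X]
    [NormedAddCommGroup E] [NormedSpace ℝ E] [FiniteDimensional ℝ E] {K : Set X} {f g : X → E}
    (hf : ContinuousOn f K) (hg : ContinuousOn g K) (hg0 : ∀ x ∈ K, g x ≠ 0)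
    (hfg : ∀ x ∈ K, f x ∈ Submodule.span ℝ {g x}) :
    ∃ a : X → ℝ, ContinuousOn a K ∧ ∀ x ∈ K, f x = a x • g x := by
  set e := toEuclidean (E := E)
  have hne : ∀ x ∈ K, ‖e (g x)‖ ^ 2 ≠ 0 := fun x hx => by simpa using hg0 x hx
  refine ⟨fun x => inner ℝ (e (f x)) (e (g x)) / ‖e (g x)‖ ^ 2, ?_, fun x hx => ?_⟩
  · have hge := e.continuous.comp_continuousOn hg
    exact ((e.continuous.comp_continuousOn hf).inner hge).div (hge.norm.pow 2) hne
  · obtain ⟨r, hr⟩ := Submodule.mem_span_singleton.1 (hfg x hx)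
    dsimp only
    rw [← hr, map_smul, real_inner_smul_left, real_inner_self_eq_norm_sq, mul_div_assoc,
      div_self (hne x hx), mul_one]

section Hyperbolicity

theorem eq_zero_of_forall_norm_le_mul_rpow {E : Type*} [NormedAddCommGroup E] {u : E}
    {C lam B : ℝ} (hlam0 : 0 < lam) (hlam1 : lam < 1)
    (hu : ∀ t : ℝ, 0 ≤ t → ‖u‖ ≤ C * lam ^ t * B) : u = 0 := by
  have hdecay : Tendsto (fun t : ℝ => C * lam ^ t * B) atTop (𝓝 0) := by
    simpa using
      ((tendsto_rpow_atTop_of_base_lt_one lam (by linarith) hlam1).const_mul C).mul_const B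
  exact norm_le_zero_iff.1 (ge_of_tendsto hdecay (eventually_atTop.2 ⟨0, hu⟩))

theorem apply_add_add_eq_of_mem {R M : Type*} [Ring R] [AddCommGroup M] [Module R M]
    {Vs Vu Vc : Submodule R M} {Ps Pu Pc : M → M}
    (hproj : ∀ v, Ps v ∈ Vs ∧ Pu v ∈ Vu ∧ Pc v ∈ Vc ∧ Ps v + Pu v + Pc v = v)
    (hdirect : ∀ vs ∈ Vs, ∀ vu ∈ Vu, ∀ vc ∈ Vc, vs + vu + vc = 0 → vs = 0 ∧ vu = 0 ∧ vc = 0)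
    {vs vu vc : M} (hs : vs ∈ Vs) (hu : vu ∈ Vu) (hc : vc ∈ Vc) :
    Ps (vs + vu + vc) = vs ∧ Pu (vs + vu + vc) = vu := by
  obtain ⟨hs', hu', hc', hsum⟩ := hproj (vs + vu + vc)
  obtain ⟨es, eu, -⟩ := hdirect _ (sub_mem hs' hs) _ (sub_mem hu' hu) _ (sub_mem hc' hc) (by
    rw [← sub_eq_zero.2 hsum]; abel)
  exact ⟨sub_eq_zero.1 es, sub_eq_zero.1 eu⟩

variable {E : Type*} [NormedAddCommGroup E] [NormedSpace ℝ E] {F : E → E} {φ : ℝ → E → E}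
  {K : Set E} {C lam : ℝ}

theorem IsC1Flow.eq_zero_of_mem_unstable (hφ : IsC1Flow F φ) (hK : ∀ t, MapsTo (φ t) K K)
    {Vu : E → Submodule ℝ E}
    (hequivu : ∀ t, ∀ x ∈ K, (Vu x).map (fderiv ℝ (φ t) x : E →ₗ[ℝ] E) = Vu (φ t x))
    (hC : 0 < C) (hlam0 : 0 < lam) (hlam1 : lam < 1)
    (hypu : ∀ t : ℝ, 0 ≤ t → ∀ x ∈ K, ∀ v ∈ Vu x, ‖fderiv ℝ (φ (-t)) x v‖ ≤ C * lam ^ t * ‖v‖)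
    {x u : E} (hx : x ∈ K) (hu : u ∈ Vu x) {B : ℝ}
    (hB : ∀ t : ℝ, 0 ≤ t → ‖fderiv ℝ (φ t) x u‖ ≤ B) : u = 0 := by
  refine eq_zero_of_forall_norm_le_mul_rpow (C := C) (B := B) hlam0 hlam1 fun t ht => ?_
  have hmem : fderiv ℝ (φ t) x u ∈ Vu (φ t x) := hequivu t x hx ▸ Submodule.mem_map_of_mem hu
  calc ‖u‖ = ‖fderiv ℝ (φ (-t)) (φ t x) (fderiv ℝ (φ t) x u)‖ := by
        rw [hφ.fderiv_apply_fderiv_of_add_eq_zero (neg_add_cancel t)]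
    _ ≤ C * lam ^ t * ‖fderiv ℝ (φ t) x u‖ := hypu t ht _ (hK t hx) _ hmem
    _ ≤ C * lam ^ t * B := by gcongr; exact hB t ht

theorem IsC1Flow.eq_zero_of_mem_stable (hφ : IsC1Flow F φ) (hK : ∀ t, MapsTo (φ t) K K)
    {Vs : E → Submodule ℝ E}
    (hequivs : ∀ t, ∀ x ∈ K, (Vs x).map (fderiv ℝ (φ t) x : E →ₗ[ℝ] E) = Vs (φ t x))
    (hC : 0 < C) (hlam0 : 0 < lam) (hlam1 : lam < 1)
    (hyps : ∀ t : ℝ, 0 ≤ t → ∀ x ∈ K, ∀ v ∈ Vs x, ‖fderiv ℝ (φ t) x v‖ ≤ C * lam ^ t * ‖v‖)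
    {x u : E} (hx : x ∈ K) (hu : u ∈ Vs x) {B : ℝ}
    (hB : ∀ t : ℝ, 0 ≤ t → ‖fderiv ℝ (φ (-t)) x u‖ ≤ B) : u = 0 := by
  refine eq_zero_of_forall_norm_le_mul_rpow (C := C) (B := B) hlam0 hlam1 fun t ht => ?_
  have hmem : fderiv ℝ (φ (-t)) x u ∈ Vs (φ (-t) x) :=
    hequivs (-t) x hx ▸ Submodule.mem_map_of_mem hu
  calc ‖u‖ = ‖fderiv ℝ (φ t) (φ (-t) x) (fderiv ℝ (φ (-t)) x u)‖ := by
        rw [hφ.fderiv_apply_fderiv_of_add_eq_zero (add_neg_cancel t)]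
    _ ≤ C * lam ^ t * ‖fderiv ℝ (φ (-t)) x u‖ := hyps t ht _ (hK (-t) hx) _ hmem
    _ ≤ C * lam ^ t * B := by gcongr; exact hB t ht

theorem IsC1Flow.mem_center_of_fderiv_apply_sub_mem_center (hφ : IsC1Flow F φ)
    (hK : ∀ t, MapsTo (φ t) K K) (Vs Vu Vc : E → Submodule ℝ E)
    (hequivs : ∀ t, ∀ x ∈ K, (Vs x).map (fderiv ℝ (φ t) x : E →ₗ[ℝ] E) = Vs (φ t x))
    (hequivu : ∀ t, ∀ x ∈ K, (Vu x).map (fderiv ℝ (φ t) x : E →ₗ[ℝ] E) = Vu (φ t x))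
    (hequivc : ∀ t, ∀ x ∈ K, (Vc x).map (fderiv ℝ (φ t) x : E →ₗ[ℝ] E) = Vc (φ t x))
    (hC : 0 < C) (hlam0 : 0 < lam) (hlam1 : lam < 1)
    (hyps : ∀ t : ℝ, 0 ≤ t → ∀ x ∈ K, ∀ v ∈ Vs x, ‖fderiv ℝ (φ t) x v‖ ≤ C * lam ^ t * ‖v‖)
    (hypu : ∀ t : ℝ, 0 ≤ t → ∀ x ∈ K, ∀ v ∈ Vu x, ‖fderiv ℝ (φ (-t)) x v‖ ≤ C * lam ^ t * ‖v‖)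
    (Ps Pu Pc : E → E →L[ℝ] E)
    (hproj : ∀ x ∈ K, ∀ v : E, Ps x v ∈ Vs x ∧ Pu x v ∈ Vu x ∧ Pc x v ∈ Vc x ∧
      Ps x v + Pu x v + Pc x v = v)
    (hdirect : ∀ x ∈ K, ∀ vs ∈ Vs x, ∀ vu ∈ Vu x, ∀ vc ∈ Vc x,
      vs + vu + vc = 0 → vs = 0 ∧ vu = 0 ∧ vc = 0)
    {M : ℝ} (hM : ∀ x ∈ K, ‖Ps x‖ + ‖Pu x‖ + ‖Pc x‖ ≤ M)
    {w : E → E} {W : ℝ} (hW : ∀ x ∈ K, ‖w x‖ ≤ W) {x v : E} (hx : x ∈ K)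
    (hv : ∀ t, fderiv ℝ (φ t) x v - w (φ t x) ∈ Vc (φ t x)) : v ∈ Vc x := by
  obtain ⟨hs, hu, hc, hsum⟩ := hproj x hx v
  have hcomp : ∀ t, Ps (φ t x) (w (φ t x)) = fderiv ℝ (φ t) x (Ps x v) ∧
      Pu (φ t x) (w (φ t x)) = fderiv ℝ (φ t) x (Pu x v) := fun t => by
    have hmem : ∀ {V : E → Submodule ℝ E}, (∀ t, ∀ x ∈ K, (V x).map (fderiv ℝ (φ t) x : E →ₗ[ℝ] E)
        = V (φ t x)) → ∀ {u}, u ∈ V x → fderiv ℝ (φ t) x u ∈ V (φ t x) :=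
      fun hV _ hu => hV t x hx ▸ Submodule.mem_map_of_mem hu
    have hw : fderiv ℝ (φ t) x (Ps x v) + fderiv ℝ (φ t) x (Pu x v) +
        (fderiv ℝ (φ t) x (Pc x v) - (fderiv ℝ (φ t) x v - w (φ t x))) = w (φ t x) := by
      nth_rewrite 4 [← hsum]
      simp only [map_add]
      abel
    simpa only [hw] using apply_add_add_eq_of_mem (hproj _ (hK t hx)) (hdirect _ (hK t hx))
      (hmem hequivs hs) (hmem hequivu hu) (sub_mem (hmem hequivc hc) (hv t))
  have hbound : ∀ y ∈ K, ‖Ps y (w y)‖ ≤ M * W ∧ ‖Pu y (w y)‖ ≤ M * W := fun y hy => by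
    have := hM y hy
    have := hW y hy
    have := norm_nonneg (Ps y)
    have := norm_nonneg (Pu y)
    have := norm_nonneg (Pc y)
    have := norm_nonneg (w y)
    exact ⟨((Ps y).le_opNorm _).trans (by nlinarith), ((Pu y).le_opNorm _).trans (by nlinarith)⟩
  have hs0 : Ps x v = 0 := hφ.eq_zero_of_mem_stable hK hequivs hC hlam0 hlam1 hyps hx hs
    fun t _ => (hcomp (-t)).1 ▸ (hbound _ (hK (-t) hx)).1
  have hu0 : Pu x v = 0 := hφ.eq_zero_of_mem_unstable hK hequivu hC hlam0 hlam1 hypu hx hu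
    fun t _ => (hcomp t).2 ▸ (hbound _ (hK t hx)).2
  rwa [← hsum, hs0, hu0, zero_add, zero_add]

end Hyperbolicity

theorem integral_eq_zero_of_hasDerivAt_comp {X : Type*} [TopologicalSpace X] [T2Space X]
    [MeasurableSpace X] [OpensMeasurableSpace X] {μ : Measure X} [IsFiniteMeasure μ]
    {φ : ℝ → X → X} (hφ : ∀ t, MeasurePreserving (φ t) μ μ) (hφ0 : ∀ x, φ 0 x = x) {K : Set X}
    (hK : IsCompact K) (hμK : ∀ᵐ x ∂μ, x ∈ K) (hφK : ∀ t, MapsTo (φ t) K K) {G g : X → ℝ}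
    (hG : ContinuousOn G K) (hg : ContinuousOn g K)
    (hGg : ∀ x ∈ K, ∀ t, HasDerivAt (fun s => G (φ s x)) (g (φ t x)) t) :
    ∫ x, g x ∂μ = 0 := by
  have hμ : μ.restrict K = μ := Measure.restrict_eq_self_of_ae_mem hμK
  have hmeas : ∀ {f : X → ℝ}, ContinuousOn f K → AEStronglyMeasurable f μ :=
    fun hf => hμ ▸ hf.aestronglyMeasurable hK.measurableSet
  obtain ⟨B, hB⟩ := hK.exists_bound_of_continuousOn hg
  obtain ⟨-, hderiv⟩ := hasDerivAt_integral_of_dominated_loc_of_deriv_le (μ := μ)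
    (F := fun t x => G (φ t x)) (F' := fun t x => g (φ t x)) (x₀ := (0 : ℝ))
    (bound := fun _ => B) univ_mem (.of_forall fun t => (hmeas hG).comp_measurePreserving (hφ t))
    (by simpa only [hφ0] using hμ ▸ hG.integrableOn_compact hK)
    (by simpa only [hφ0] using hmeas hg) (hμK.mono fun x hx t _ => hB _ (hφK t hx))
    (integrable_const B) (hμK.mono fun x hx t _ => hGg x hx t)
  have hinv : (fun t => ∫ x, G (φ t x) ∂μ) = fun _ => ∫ x, G x ∂μ := funext fun t => by
    rw [← integral_map (hφ t).aemeasurable (by rw [(hφ t).map_eq]; exact hmeas hG),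
      (hφ t).map_eq]
  rw [hinv] at hderiv
  simpa only [hφ0] using hderiv.unique (hasDerivAt_const 0 _)

theorem setIntegral_sub_setIntegral_eq_of_hasDerivAt_comp {X E : Type*} [TopologicalSpace X]
    [T2Space X] [MeasurableSpace X] [OpensMeasurableSpace X] [NormedAddCommGroup E]
    [NormedSpace ℝ E] {μ : Measure X} [IsFiniteMeasure μ] {φ : ℝ → X → X}
    (hφ : ∀ t, MeasurePreserving (φ t) μ μ) (hφ0 : ∀ x, φ 0 x = x) {K : Set X}
    (hK : IsCompact K) (hμK : ∀ᵐ x ∂μ, x ∈ K) (hφK : ∀ t, MapsTo (φ t) K K)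
    {ω : X → E →L[ℝ] ℝ} {v₁ v₂ : X → E} {ψ η₁ η₂ G : X → ℝ} (hω : ContinuousOn ω K)
    (hv₁ : ContinuousOn v₁ K) (hv₂ : ContinuousOn v₂ K) (hψ : ContinuousOn ψ K)
    (hη₁ : ContinuousOn η₁ K) (hη₂ : ContinuousOn η₂ K) (hG : ContinuousOn G K)
    (hGd : ∀ x ∈ K, ∀ t, HasDerivAt (fun s => G (φ s x))
      (ω (φ t x) (v₁ (φ t x) - v₂ (φ t x)) - (η₁ (φ t x) - η₂ (φ t x)) * ψ (φ t x)) t) :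
    (∫ x in K, ω x (v₁ x) ∂μ) - (∫ x in K, η₁ x * ψ x ∂μ) =
      (∫ x in K, ω x (v₂ x) ∂μ) - (∫ x in K, η₂ x * ψ x ∂μ) := by
  have hμ : μ.restrict K = μ := Measure.restrict_eq_self_of_ae_mem hμK
  have hint : ∀ {f : X → ℝ}, ContinuousOn f K → Integrable f μ :=
    fun hf => hμ ▸ hf.integrableOn_compact hK
  have hω₁ := hω.clm_apply hv₁
  have hω₂ := hω.clm_apply hv₂
  have hηψ₁ := hη₁.mul hψ
  have hηψ₂ := hη₂.mul hψ
  have hzero := integral_eq_zero_of_hasDerivAt_comp hφ hφ0 hK hμK hφK hG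
    (g := fun x => (ω x (v₁ x) - η₁ x * ψ x) - (ω x (v₂ x) - η₂ x * ψ x))
    ((hω₁.sub hηψ₁).sub (hω₂.sub hηψ₂))
    fun x hx t => (hGd x hx t).congr_deriv (by rw [map_sub]; ring)
  have h₀ : ∫ x, (ω x (v₁ x) - η₁ x * ψ x) - (ω x (v₂ x) - η₂ x * ψ x) ∂μ =
      (∫ x, ω x (v₁ x) - η₁ x * ψ x ∂μ) - ∫ x, ω x (v₂ x) - η₂ x * ψ x ∂μ :=
    integral_sub (hint (hω₁.sub hηψ₁)) (hint (hω₂.sub hηψ₂))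
  have h₁ : ∫ x, ω x (v₁ x) - η₁ x * ψ x ∂μ = (∫ x, ω x (v₁ x) ∂μ) - ∫ x, η₁ x * ψ x ∂μ :=
    integral_sub (hint hω₁) (hint hηψ₁)
  have h₂ : ∫ x, ω x (v₂ x) - η₂ x * ψ x ∂μ = (∫ x, ω x (v₂ x) ∂μ) - ∫ x, η₂ x * ψ x ∂μ :=
    integral_sub (hint hω₂) (hint hηψ₂)
  rw [hμ]
  linarith

theorem shadowing_contribution_well_defined_general
    {E : Type*} [NormedAddCommGroup E] [NormedSpace ℝ E] [FiniteDimensional ℝ E]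
    (F : E → E) (hF : ContDiff ℝ 2 F)
    (φ : ℝ → E → E)
    (hφ0 : ∀ x : E, φ 0 x = x)
    (hφadd : ∀ (s t : ℝ) (x : E), φ (s + t) x = φ s (φ t x))
    (hφode : ∀ (x : E) (t : ℝ), HasDerivAt (fun s => φ s x) (F (φ t x)) t)
    (hφC1 : ∀ t : ℝ, ContDiff ℝ 1 (φ t))
    (hφD : Continuous fun p : ℝ × E => fderiv ℝ (φ p.1) p.2)
    (K : Set E) (hKc : IsCompact K) (hφK : ∀ t : ℝ, φ t '' K = K)
    (hFne : ∀ x ∈ K, F x ≠ 0)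
    (Vs Vu Vc : E → Submodule ℝ E)
    (hVc : ∀ x ∈ K, Vc x = Submodule.span ℝ {F x})
    (hequivs : ∀ (t : ℝ), ∀ x ∈ K, (Vs x).map (fderiv ℝ (φ t) x : E →ₗ[ℝ] E) = Vs (φ t x))
    (hequivu : ∀ (t : ℝ), ∀ x ∈ K, (Vu x).map (fderiv ℝ (φ t) x : E →ₗ[ℝ] E) = Vu (φ t x))
    (hequivc : ∀ (t : ℝ), ∀ x ∈ K, (Vc x).map (fderiv ℝ (φ t) x : E →ₗ[ℝ] E) = Vc (φ t x))
    (C lam : ℝ) (hC : 0 < C) (hlam0 : 0 < lam) (hlam1 : lam < 1)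
    (hyps : ∀ t : ℝ, 0 ≤ t → ∀ x ∈ K, ∀ v ∈ Vs x, ‖fderiv ℝ (φ t) x v‖ ≤ C * lam ^ t * ‖v‖)
    (hypu : ∀ t : ℝ, 0 ≤ t → ∀ x ∈ K, ∀ v ∈ Vu x, ‖fderiv ℝ (φ (-t)) x v‖ ≤ C * lam ^ t * ‖v‖)
    (Ps Pu Pc : E → E →L[ℝ] E)
    (hproj : ∀ x ∈ K, ∀ v : E, Ps x v ∈ Vs x ∧ Pu x v ∈ Vu x ∧ Pc x v ∈ Vc x ∧
      Ps x v + Pu x v + Pc x v = v)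
    (hdirect : ∀ x ∈ K, ∀ vs ∈ Vs x, ∀ vu ∈ Vu x, ∀ vc ∈ Vc x,
      vs + vu + vc = 0 → vs = 0 ∧ vu = 0 ∧ vc = 0)
    (hPbdd : ∃ M : ℝ, ∀ x ∈ K, ‖Ps x‖ + ‖Pu x‖ + ‖Pc x‖ ≤ M)
    [MeasurableSpace E] [BorelSpace E]
    (ρ : Measure E) [IsProbabilityMeasure ρ] (hρK : ρ K = 1)
    (hρinv : ∀ (t : ℝ) (A : Set E), MeasurableSet A → ρ (φ t ⁻¹' A) = ρ A)
    (ω : E → E →L[ℝ] ℝ) (hωc : ContinuousOn ω K)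
    (ψ : E → ℝ) (hψc : ContinuousOn ψ K)
    (hψ : ∀ x₀ ∈ K, ∀ t : ℝ,
      HasDerivAt (fun s => ψ (φ s x₀)) (ω (φ t x₀) (F (φ t x₀))) t)
    (X : E → E)
    (v₁ v₂ : E → E) (η₁ η₂ : E → ℝ)
    (hv₁c : ContinuousOn v₁ K)
    (hη₁c : ContinuousOn η₁ K)
    (hpair₁ : ∀ x₀ ∈ K, ∀ t : ℝ,
      HasDerivAt (fun s => v₁ (φ s x₀))
        (fderiv ℝ F (φ t x₀) (v₁ (φ t x₀)) - η₁ (φ t x₀) • F (φ t x₀) + X (φ t x₀)) t)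
    (hv₂c : ContinuousOn v₂ K)
    (hη₂c : ContinuousOn η₂ K)
    (hpair₂ : ∀ x₀ ∈ K, ∀ t : ℝ,
      HasDerivAt (fun s => v₂ (φ s x₀))
        (fderiv ℝ F (φ t x₀) (v₂ (φ t x₀)) - η₂ (φ t x₀) • F (φ t x₀) + X (φ t x₀)) t) :
    (∫ x in K, ω x (v₁ x) ∂ρ) - (∫ x in K, η₁ x * ψ x ∂ρ) =
      (∫ x in K, ω x (v₂ x) ∂ρ) - (∫ x in K, η₂ x * ψ x ∂ρ) := by
  have hflow : IsC1Flow F φ := ⟨hφ0, hφadd, hφode, hφC1, hφD⟩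
  have hF1 : ContDiff ℝ 1 F := hF.of_le (by norm_num)
  have hK : ∀ t, MapsTo (φ t) K K := fun t x hx => hφK t ▸ mem_image_of_mem _ hx
  set w := fun x => v₁ x - v₂ x
  set ζ := fun x => η₁ x - η₂ x
  have hwc : ContinuousOn w K := hv₁c.sub hv₂c
  have hζc : ContinuousOn ζ K := hη₁c.sub hη₂c
  have hw : ∀ x ∈ K, ∀ t, HasDerivAt (fun s => w (φ s x))
      (fderiv ℝ F (φ t x) (w (φ t x)) - ζ (φ t x) • F (φ t x)) t := fun x hx t =>
    ((hpair₁ x hx t).sub (hpair₂ x hx t)).congr_deriv (by simp only [w, ζ, map_sub, sub_smul]; abel)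
  obtain ⟨W, hW⟩ := hKc.exists_bound_of_continuousOn hwc
  obtain ⟨M, hM⟩ := hPbdd
  have hcenter : ∀ x ∈ K, w x ∈ Submodule.span ℝ {F x} := fun x hx => hVc x hx ▸
    hflow.mem_center_of_fderiv_apply_sub_mem_center hK Vs Vu Vc hequivs hequivu hequivc hC hlam0
      hlam1 hyps hypu Ps Pu Pc hproj hdirect hM hW hx fun t => hVc _ (hK t hx) ▸
        hflow.fderiv_apply_sub_mem_span hF1
          (hζc.comp_continuous (hflow.continuous_orbit x) fun s => hK s hx) (hw x hx) t
  obtain ⟨a, hac, hwa⟩ :=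
    exists_continuousOn_smul_eq_of_mem_span hwc hF.continuous.continuousOn hFne hcenter
  have hρK' : ∀ᵐ x ∂ρ, x ∈ K :=
    (ae_mem_iff_measure_eq hKc.measurableSet.nullMeasurableSet).2 (by rw [hρK, measure_univ])
  have hρφ : ∀ t, MeasurePreserving (φ t) ρ ρ := fun t =>
    ⟨(hφC1 t).continuous.measurable, Measure.ext fun A hA => by
      rw [Measure.map_apply (hφC1 t).continuous.measurable hA, hρinv t A hA]⟩
  refine setIntegral_sub_setIntegral_eq_of_hasDerivAt_comp hρφ hφ0 hKc hρK' hK hωc hv₁c hv₂c hψc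
    hη₁c hη₂c (hac.mul hψc) fun x hx t => ?_
  refine ((hflow.hasDerivAt_coeff_comp hF1 hK hFne hζc hw hwa hx t).mul
    (hψ x hx t)).congr_deriv ?_
  have hwat := hwa _ (hK t hx)
  simp only [w] at hwat
  simp only [ζ, hwat, map_smul, smul_eq_mul]
  ring

theorem shadowing_contribution_well_defined
    {E : Type*} [NormedAddCommGroup E] [NormedSpace ℝ E] [FiniteDimensional ℝ E]
    (F : E → E) (hF : ContDiff ℝ 2 F)
    (φ : ℝ → E → E)
    (hφ0 : ∀ x : E, φ 0 x = x)
    (hφadd : ∀ (s t : ℝ) (x : E), φ (s + t) x = φ s (φ t x))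
    (hφode : ∀ (x : E) (t : ℝ), HasDerivAt (fun s => φ s x) (F (φ t x)) t)
    (hφC1 : ∀ t : ℝ, ContDiff ℝ 1 (φ t))
    (hφD : Continuous fun p : ℝ × E => fderiv ℝ (φ p.1) p.2)
    (K : Set E) (hKc : IsCompact K) (hφK : ∀ t : ℝ, φ t '' K = K)
    (hFne : ∀ x ∈ K, F x ≠ 0)
    (Vs Vu Vc : E → Submodule ℝ E)
    (hVc : ∀ x ∈ K, Vc x = Submodule.span ℝ {F x})
    (hequivs : ∀ (t : ℝ), ∀ x ∈ K, (Vs x).map (fderiv ℝ (φ t) x : E →ₗ[ℝ] E) = Vs (φ t x))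
    (hequivu : ∀ (t : ℝ), ∀ x ∈ K, (Vu x).map (fderiv ℝ (φ t) x : E →ₗ[ℝ] E) = Vu (φ t x))
    (hequivc : ∀ (t : ℝ), ∀ x ∈ K, (Vc x).map (fderiv ℝ (φ t) x : E →ₗ[ℝ] E) = Vc (φ t x))
    (C lam : ℝ) (hC : 0 < C) (hlam0 : 0 < lam) (hlam1 : lam < 1)
    (hyps : ∀ t : ℝ, 0 ≤ t → ∀ x ∈ K, ∀ v ∈ Vs x, ‖fderiv ℝ (φ t) x v‖ ≤ C * lam ^ t * ‖v‖)
    (hypu : ∀ t : ℝ, 0 ≤ t → ∀ x ∈ K, ∀ v ∈ Vu x, ‖fderiv ℝ (φ (-t)) x v‖ ≤ C * lam ^ t * ‖v‖)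
    (Ps Pu Pc : E → E →L[ℝ] E)
    (hproj : ∀ x ∈ K, ∀ v : E, Ps x v ∈ Vs x ∧ Pu x v ∈ Vu x ∧ Pc x v ∈ Vc x ∧
      Ps x v + Pu x v + Pc x v = v)
    (hdirect : ∀ x ∈ K, ∀ vs ∈ Vs x, ∀ vu ∈ Vu x, ∀ vc ∈ Vc x,
      vs + vu + vc = 0 → vs = 0 ∧ vu = 0 ∧ vc = 0)
    (hPbdd : ∃ M : ℝ, ∀ x ∈ K, ‖Ps x‖ + ‖Pu x‖ + ‖Pc x‖ ≤ M)
    [MeasurableSpace E] [BorelSpace E]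
    (ρ : Measure E) [IsProbabilityMeasure ρ] (hρK : ρ K = 1)
    (hρinv : ∀ (t : ℝ) (A : Set E), MeasurableSet A → ρ (φ t ⁻¹' A) = ρ A)
    (hρerg : ∀ A : Set E, MeasurableSet A → (∀ t : ℝ, φ t ⁻¹' A = A) → ρ A = 0 ∨ ρ A = 1)
    (ω : E → E →L[ℝ] ℝ) (hωc : ContinuousOn ω K)
    (ψ : E → ℝ) (hψc : ContinuousOn ψ K)
    (hψ : ∀ x₀ ∈ K, ∀ t : ℝ,
      HasDerivAt (fun s => ψ (φ s x₀)) (ω (φ t x₀) (F (φ t x₀))) t)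
    (X : E → E) (hXc : ContinuousOn X K)
    (v₁ v₂ : E → E) (η₁ η₂ : E → ℝ)
    (hv₁c : ContinuousOn v₁ K) (hv₁b : ∃ M : ℝ, ∀ x ∈ K, ‖v₁ x‖ ≤ M)
    (hη₁c : ContinuousOn η₁ K) (hη₁b : ∃ M : ℝ, ∀ x ∈ K, |η₁ x| ≤ M)
    (hpair₁ : ∀ x₀ ∈ K, ∀ t : ℝ,
      HasDerivAt (fun s => v₁ (φ s x₀))
        (fderiv ℝ F (φ t x₀) (v₁ (φ t x₀)) - η₁ (φ t x₀) • F (φ t x₀) + X (φ t x₀)) t)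
    (hv₂c : ContinuousOn v₂ K) (hv₂b : ∃ M : ℝ, ∀ x ∈ K, ‖v₂ x‖ ≤ M)
    (hη₂c : ContinuousOn η₂ K) (hη₂b : ∃ M : ℝ, ∀ x ∈ K, |η₂ x| ≤ M)
    (hpair₂ : ∀ x₀ ∈ K, ∀ t : ℝ,
      HasDerivAt (fun s => v₂ (φ s x₀))
        (fderiv ℝ F (φ t x₀) (v₂ (φ t x₀)) - η₂ (φ t x₀) • F (φ t x₀) + X (φ t x₀)) t) :
    (∫ x in K, ω x (v₁ x) ∂ρ) - (∫ x in K, η₁ x * ψ x ∂ρ) =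
      (∫ x in K, ω x (v₂ x) ∂ρ) - (∫ x in K, η₂ x * ψ x ∂ρ) :=
  shadowing_contribution_well_defined_general F hF φ hφ0 hφadd hφode hφC1 hφD K hKc hφK hFne Vs Vu
    Vc hVc hequivs hequivu hequivc C lam hC hlam0 hlam1 hyps hypu Ps Pu Pc hproj hdirect hPbdd ρ hρK
    hρinv ω hωc ψ hψc hψ X v₁ v₂ η₁ η₂ hv₁c hη₁c hpair₁ hv₂c hη₂c hpair₂
end

section
/- (Shadowing/unstable decomposition of flows.) Let ρ be a φ-invariant Borel probability measure on K, assume P^s, P^u, P^c are continuous on K, let X be a continuous vector field on K and Φ : E → ℝ a C^1 function. Define η : K → ℝ by P^c(x)X(x) = η(x)F(x), and define v(x) := ∫₀^∞ Dφ^t(φ^{-t}x) P^s(φ^{-t}x) X(φ^{-t}x) dt − ∫₀^∞ Dφ^{-t}(φ^{t}x) P^u(φ^{t}x) X(φ^{t}x) dt. Assume lim_{T→∞} ∫_K η · Φ∘φ^T dρ = (∫_K η dρ)(∫_K Φ dρ). Then the shadowing contribution SC := ∫_K dΦ(x)(v(x)) dρ − ∫_K η(x)(Φ(x) − ∫_K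 Φ dρ) dρ satisfies SC = ∫₀^∞ ∫_K dΦ(φ^t x)[Dφ^t(x)((P^s(x)+P^c(x))X(x))] dρ(x) dt − ∫₀^∞ ∫_K dΦ(φ^{-t} x)[Dφ^{-t}(x)(P^u(x)X(x))] dρ(x) dt, with all integrals convergent. -/
/-!
Along the stable and unstable directions the integrands defining `v` decay like `lam ^ t`, so
Fubini's theorem exchanges `∫ ρ` with `∫ t`, and the invariance of `ρ` under `φ t` moves the base
point from `φ (-t) x` back to `x`. This produces the stable and unstable time integrals. The central
component of `X` is `η • F`, and `Dφ^t` maps `F` to `F ∘ φ t`, so its time integral up to `T` is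
`∫ η * (Φ ∘ φ T - Φ) dρ` by the fundamental theorem of calculus. As `T → ∞` the correlation
hypothesis turns this into `(∫ η)(∫ Φ) - ∫ η * Φ`, which is the correction term in `SC`.
-/

open Function Set Filter MeasureTheory Topology

section FlowCalculus

variable {E : Type*} [NormedAddCommGroup E] [NormedSpace ℝ E]

theorem continuous_uncurry_of_continuous_fderiv [ProperSpace E] {φ : ℝ → E → E}
    (hcont : ∀ x, Continuous fun t => φ t x) (hdiff : ∀ t, Differentiable ℝ (φ t))
    (hD : Continuous fun p : ℝ × E => fderiv ℝ (φ p.1) p.2) : Continuous (uncurry φ) := by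
  refine continuous_iff_continuousAt.2 fun ⟨t₀, x₀⟩ => ?_
  obtain ⟨L, hL⟩ := (isCompact_Icc.prod (isCompact_closedBall x₀ 1)).exists_bound_of_continuousOn
    (f := fun p : ℝ × E => fderiv ℝ (φ p.1) p.2) (s := Icc (t₀ - 1) (t₀ + 1) ×ˢ _) hD.continuousOn
  have hlip : ∀ t ∈ Icc (t₀ - 1) (t₀ + 1),
      LipschitzOnWith L.toNNReal (φ t) (Metric.closedBall x₀ 1) := fun t ht =>
    (convex_closedBall x₀ 1).lipschitzOnWith_of_nnnorm_fderiv_le (fun x _ => hdiff t x)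
      fun x hx => by
        rw [← NNReal.coe_le_coe, coe_nnnorm, Real.coe_toNNReal']
        exact le_max_of_le_left (hL (t, x) ⟨ht, hx⟩)
  have hN : Icc (t₀ - 1) (t₀ + 1) ×ˢ Metric.closedBall x₀ 1 ∈ 𝓝 (t₀, x₀) :=
    prod_mem_nhds (Icc_mem_nhds (by linarith) (by linarith)) (Metric.closedBall_mem_nhds _ one_pos)
  exact (continuousOn_prod_of_continuousOn_lipschitzOnWith' (uncurry φ) _ hlip
    fun x _ => (hcont x).continuousOn).continuousAt hN

theorem Flow.fderiv_apply_of_hasDerivAt (ϕ : Flow ℝ E) {F : E → E}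
    (hode : ∀ x t, HasDerivAt (fun s => ϕ s x) (F (ϕ t x)) t) {t : ℝ} {x : E}
    (hd : DifferentiableAt ℝ (ϕ t) x) : fderiv ℝ (ϕ t) x (F x) = F (ϕ t x) := by
  have hcomp : HasDerivAt (fun s => ϕ t (ϕ s x)) (fderiv ℝ (ϕ t) x (F x)) 0 := by
    have h0 := hode x 0
    rw [ϕ.map_zero_apply] at h0
    exact hd.hasFDerivAt.comp_hasDerivAt_of_eq 0 h0 (ϕ.map_zero_apply x).symm
  have hshift : HasDerivAt (fun s => ϕ t (ϕ s x)) (F (ϕ t x)) 0 := by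
    simp_rw [← ϕ.map_add]
    simpa using (hode x (t + 0)).comp_const_add t 0
  exact hcomp.unique hshift

end FlowCalculus

theorem continuousOn_of_eq_smul_of_ne_zero {X E : Type*} [TopologicalSpace X]
    [NormedAddCommGroup E] [NormedSpace ℝ E] {K : Set X} {a F : X → E} {η : X → ℝ}
    (ha : ContinuousOn a K) (hF : ContinuousOn F K) (hF0 : ∀ x ∈ K, F x ≠ 0)
    (haη : ∀ x ∈ K, a x = η x • F x) : ContinuousOn η K := by
  intro x₀ hx₀
  obtain ⟨g, -, hg⟩ := exists_dual_vector ℝ (F x₀) (norm_ne_zero_iff.2 (hF0 x₀ hx₀))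
  have hgF : g (F x₀) ≠ 0 := by rw [hg]; exact_mod_cast norm_ne_zero_iff.2 (hF0 x₀ hx₀)
  have hquot : ∀ x ∈ K, g (F x) ≠ 0 → η x = g (a x) / g (F x) := fun x hx hx0 => by
    rw [haη x hx, map_smul, smul_eq_mul, mul_div_assoc, div_self hx0, mul_one]
  have hcont : ContinuousWithinAt (fun x => g (a x) / g (F x)) K x₀ :=
    (g.continuous.continuousAt.comp_continuousWithinAt (ha x₀ hx₀)).div
      (g.continuous.continuousAt.comp_continuousWithinAt (hF x₀ hx₀)) hgF
  refine hcont.congr_of_eventuallyEq ?_ (hquot x₀ hx₀ hgF)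
  filter_upwards [self_mem_nhdsWithin,
    (g.continuous.continuousAt.comp_continuousWithinAt (hF x₀ hx₀)).eventually_ne hgF]
    with x hx hx0 using hquot x hx hx0

theorem ContinuousOn.integrable_of_ae_mem {X F : Type*} [TopologicalSpace X] [T2Space X]
    [MeasurableSpace X] [OpensMeasurableSpace X] [NormedAddCommGroup F] {K : Set X}
    {ρ : Measure X} [IsFiniteMeasure ρ] {f : X → F} (hf : ContinuousOn f K) (hK : IsCompact K)
    (hρK : ∀ᵐ x ∂ρ, x ∈ K) : Integrable f ρ := by
  simpa [IntegrableOn, Measure.restrict_eq_self_of_ae_mem hρK] using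
    hf.integrableOn_compact (μ := ρ) hK

theorem integrableOn_Ioi_rpow_of_lt_one (a : ℝ) {lam : ℝ} (h0 : 0 < lam) (h1 : lam < 1) :
    IntegrableOn (fun t : ℝ => lam ^ t) (Ioi a) := by
  have hlog : 0 < -Real.log lam := neg_pos.2 (Real.log_neg h0 h1)
  refine (exp_neg_integrableOn_Ioi a hlog).congr_fun (fun t _ => ?_) measurableSet_Ioi
  simp only [Real.rpow_def_of_pos h0, neg_neg, mul_comm]

theorem integrable_prod_of_continuousOn_of_norm_le {E F : Type*} [TopologicalSpace E]
    [MeasurableSpace E] [OpensMeasurableSpace E] [NormedAddCommGroup F]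
    [SecondCountableTopologyEither (ℝ × E) F] {K : Set E} {ρ : Measure E} [IsFiniteMeasure ρ]
    (hK : MeasurableSet K) (hρK : ∀ᵐ x ∂ρ, x ∈ K) {S : Set ℝ} (hS : MeasurableSet S)
    {g : ℝ → ℝ} (hg : IntegrableOn g S) {H : ℝ × E → F} (hH : ContinuousOn H (S ×ˢ K))
    (hHg : ∀ t ∈ S, ∀ x ∈ K, ‖H (t, x)‖ ≤ g t) :
    Integrable H ((volume.restrict S).prod ρ) := by
  have hprod : (volume.restrict S).prod ρ = (volume.prod ρ).restrict (S ×ˢ K) := by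
    rw [← Measure.prod_restrict, Measure.restrict_eq_self_of_ae_mem hρK]
  refine Integrable.mono' (hg.comp_fst ρ) ((hprod ▸ hH.aestronglyMeasurable (hS.prod hK))) ?_
  rw [hprod]
  filter_upwards [ae_restrict_mem (hS.prod hK)] with p hp using hHg p.1 hp.1 p.2 hp.2

section FlowIntegrals

variable {E : Type*} [NormedAddCommGroup E] [NormedSpace ℝ E] [MeasurableSpace E] [BorelSpace E]
  {ϕ : Flow ℝ E} {K : Set E} {ρ : Measure E} [IsFiniteMeasure ρ] {L : E → E →L[ℝ] ℝ}

theorem integrable_prod_clm_apply_of_norm_le_rpow (hK : IsCompact K) (hρK : ∀ᵐ x ∂ρ, x ∈ K)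
    (hL : Continuous L) {α : ℝ × E → E} (hα : Continuous α)
    (hαK : ∀ p : ℝ × E, p.2 ∈ K → α p ∈ K) {W : ℝ × E → E} (hW : ContinuousOn W (univ ×ˢ K))
    {c lam : ℝ} (hlam0 : 0 < lam) (hlam1 : lam < 1)
    (hWc : ∀ t, 0 ≤ t → ∀ x ∈ K, ‖W (t, x)‖ ≤ c * lam ^ t) :
    Integrable (fun p => L (α p) (W p)) ((volume.restrict (Ioi 0)).prod ρ) := by
  obtain ⟨B, hB⟩ := hK.exists_bound_of_continuousOn hL.continuousOn
  refine integrable_prod_of_continuousOn_of_norm_le hK.measurableSet hρK measurableSet_Ioi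
    ((integrableOn_Ioi_rpow_of_lt_one 0 hlam0 hlam1).const_mul (B * c))
    ((hL.comp hα).continuousOn.clm_apply (hW.mono (prod_mono (subset_univ _) subset_rfl)))
    fun t ht x hx => ?_
  rw [mul_assoc]
  exact ContinuousLinearMap.le_of_opNorm_le_of_le _ (hB _ (hαK (t, x) hx)) (hWc t ht.le x hx)

theorem integral_apply_integral_comp_flow_neg [CompleteSpace E] (hK : IsCompact K)
    (hϕK : ∀ t, MapsTo (ϕ t) K K) (hρK : ∀ᵐ x ∂ρ, x ∈ K) (hρ : ∀ t, MeasurePreserving (ϕ t) ρ ρ)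
    (hL : Continuous L) {w : ℝ → E → E} (hw : ContinuousOn (uncurry w) (univ ×ˢ K))
    {c lam : ℝ} (hlam0 : 0 < lam) (hlam1 : lam < 1)
    (hwc : ∀ t, 0 ≤ t → ∀ x ∈ K, ‖w t x‖ ≤ c * lam ^ t) :
    IntegrableOn (fun t => ∫ x, L (ϕ t x) (w t x) ∂ρ) (Ioi 0) ∧
    Integrable (fun x => L x (∫ t in Ioi 0, w t (ϕ (-t) x))) ρ ∧
    ∫ x, L x (∫ t in Ioi 0, w t (ϕ (-t) x)) ∂ρ = ∫ t in Ioi 0, ∫ x, L (ϕ t x) (w t x) ∂ρ := by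
  have hpull : ContinuousOn (fun p : ℝ × E => w p.1 (ϕ (-p.1) p.2)) (univ ×ˢ K) :=
    hw.comp (continuous_fst.prodMk (ϕ.continuous continuous_fst.neg continuous_snd)).continuousOn
      fun p hp => ⟨trivial, hϕK _ hp.2⟩
  have hG := integrable_prod_clm_apply_of_norm_le_rpow hK hρK hL
    (ϕ.continuous continuous_fst continuous_snd) (fun p hp => hϕK p.1 hp) hw hlam0 hlam1 hwc
  have hY := integrable_prod_clm_apply_of_norm_le_rpow hK hρK hL continuous_snd (fun _ hp => hp)
    hpull hlam0 hlam1 fun t ht x hx => hwc t ht _ (hϕK _ hx)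
  have hslice : ∀ x ∈ K, Integrable (fun t => w t (ϕ (-t) x)) (volume.restrict (Ioi 0)) :=
    fun x hx => Integrable.mono' ((integrableOn_Ioi_rpow_of_lt_one 0 hlam0 hlam1).const_mul c)
      ((hpull.comp_continuous (continuous_id.prodMk continuous_const)
        fun _ => ⟨trivial, hx⟩).aestronglyMeasurable)
      ((ae_restrict_mem measurableSet_Ioi).mono fun t ht => hwc t (le_of_lt ht) _ (hϕK _ hx))
  have hcomm : (fun x => L x (∫ t in Ioi 0, w t (ϕ (-t) x)))
      =ᵐ[ρ] fun x => ∫ t in Ioi 0, L x (w t (ϕ (-t) x)) :=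
    hρK.mono fun x hx => ((L x).integral_comp_comm (hslice x hx)).symm
  have hback : ∀ t x, ϕ t (ϕ (-t) x) = x := fun t x => by
    rw [← ϕ.map_add, add_neg_cancel, ϕ.map_zero_apply]
  have hYG : ∀ t, ∫ x, L x (w t (ϕ (-t) x)) ∂ρ = ∫ x, L (ϕ t x) (w t x) ∂ρ := fun t => by
    simpa only [hback] using (hρ (-t)).integral_comp (ϕ.toHomeomorph (-t)).measurableEmbedding
      (fun y => L (ϕ t y) (w t y))
  refine ⟨hG.integral_prod_left, hY.integral_prod_right.congr hcomm.symm, ?_⟩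
  rw [integral_congr_ae hcomm,
    ← integral_integral_swap (f := fun t x => L x (w t (ϕ (-t) x))) hY]
  simp_rw [hYG]

theorem integral_apply_integral_fderiv_flow_neg [CompleteSpace E]
    (hD : Continuous fun p : ℝ × E => fderiv ℝ (ϕ p.1) p.2) (hK : IsCompact K)
    (hϕK : ∀ t, MapsTo (ϕ t) K K) (hρK : ∀ᵐ x ∂ρ, x ∈ K) (hρ : ∀ t, MeasurePreserving (ϕ t) ρ ρ)
    (hL : Continuous L) {u : E → E} (hu : ContinuousOn u K) {C lam : ℝ} (hlam0 : 0 < lam)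
    (hlam1 : lam < 1)
    (hcontr : ∀ t, 0 ≤ t → ∀ x ∈ K, ‖fderiv ℝ (ϕ t) x (u x)‖ ≤ C * lam ^ t * ‖u x‖) :
    IntegrableOn (fun t => ∫ x, L (ϕ t x) (fderiv ℝ (ϕ t) x (u x)) ∂ρ) (Ioi 0) ∧
    Integrable (fun x => L x (∫ t in Ioi 0, fderiv ℝ (ϕ t) (ϕ (-t) x) (u (ϕ (-t) x)))) ρ ∧
    ∫ x, L x (∫ t in Ioi 0, fderiv ℝ (ϕ t) (ϕ (-t) x) (u (ϕ (-t) x))) ∂ρ =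
      ∫ t in Ioi 0, ∫ x, L (ϕ t x) (fderiv ℝ (ϕ t) x (u x)) ∂ρ := by
  obtain ⟨M, hM⟩ := hK.exists_bound_of_continuousOn hu
  refine integral_apply_integral_comp_flow_neg hK hϕK hρK hρ hL (c := |C| * M)
    (hD.continuousOn.clm_apply (hu.comp continuousOn_snd fun p hp => hp.2)) hlam0 hlam1
    fun t ht x hx => ?_
  have hlamt : 0 ≤ lam ^ t := Real.rpow_nonneg hlam0.le t
  calc ‖fderiv ℝ (ϕ t) x (u x)‖ ≤ C * lam ^ t * ‖u x‖ := hcontr t ht x hx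
    _ ≤ |C| * lam ^ t * M := by gcongr; exacts [le_abs_self C, hM x hx]
    _ = |C| * M * lam ^ t := by ring

theorem intervalIntegral_integral_fderiv_flow_of_eq_smul {F : E → E}
    (hode : ∀ x t, HasDerivAt (fun s => ϕ s x) (F (ϕ t x)) t)
    (hdiff : ∀ t, Differentiable ℝ (ϕ t)) (hD : Continuous fun p : ℝ × E => fderiv ℝ (ϕ p.1) p.2)
    (hK : IsCompact K) (hρK : ∀ᵐ x ∂ρ, x ∈ K) {Φ : E → ℝ} (hΦ : ContDiff ℝ 1 Φ)
    {a : E → E} (ha : ContinuousOn a K) {η : E → ℝ} (hη : ContinuousOn η K)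
    (haη : ∀ x ∈ K, a x = η x • F x) (T : ℝ) :
    IntervalIntegrable (fun t => ∫ x, fderiv ℝ Φ (ϕ t x) (fderiv ℝ (ϕ t) x (a x)) ∂ρ) volume 0 T ∧
    ∫ t in 0..T, ∫ x, fderiv ℝ Φ (ϕ t x) (fderiv ℝ (ϕ t) x (a x)) ∂ρ =
      ∫ x, η x * Φ (ϕ T x) ∂ρ - ∫ x, η x * Φ x ∂ρ := by
  have hH : ContinuousOn (fun p : ℝ × E => fderiv ℝ Φ (ϕ p.1 p.2) (fderiv ℝ (ϕ p.1) p.2 (a p.2)))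
      (univ ×ˢ K) :=
    ((hΦ.continuous_fderiv one_ne_zero).comp
      (ϕ.continuous continuous_fst continuous_snd)).continuousOn.clm_apply
      (hD.continuousOn.clm_apply (ha.comp continuousOn_snd fun p hp => hp.2))
  obtain ⟨b, hb⟩ := (isCompact_uIcc.prod hK).exists_bound_of_continuousOn
    (hH.mono (prod_mono (subset_univ (uIcc 0 T)) subset_rfl))
  have hint : Integrable (uncurry fun t x => fderiv ℝ Φ (ϕ t x) (fderiv ℝ (ϕ t) x (a x)))
      ((volume.restrict (uIoc 0 T)).prod ρ) :=
    integrable_prod_of_continuousOn_of_norm_le hK.measurableSet hρK measurableSet_uIoc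
      (integrableOn_const measure_Ioc_lt_top.ne)
      (hH.mono (prod_mono (subset_univ _) subset_rfl))
      fun t ht x hx => hb (t, x) ⟨uIoc_subset_uIcc ht, hx⟩
  have hftc : ∀ x ∈ K, ∫ t in 0..T, fderiv ℝ Φ (ϕ t x) (fderiv ℝ (ϕ t) x (a x)) =
      η x * Φ (ϕ T x) - η x * Φ x := by
    intro x hx
    have hderiv : ∀ t, HasDerivAt (fun s => η x * Φ (ϕ s x))
        (fderiv ℝ Φ (ϕ t x) (fderiv ℝ (ϕ t) x (a x))) t := fun t => by
      rw [haη x hx, map_smul, ϕ.fderiv_apply_of_hasDerivAt hode (hdiff t x), map_smul,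
        smul_eq_mul]
      exact ((hΦ.differentiable one_ne_zero (ϕ t x)).hasFDerivAt.comp_hasDerivAt t
        (hode x t)).const_mul (η x)
    rw [intervalIntegral.integral_eq_sub_of_hasDerivAt (fun t _ => hderiv t)
      ((hH.comp_continuous (continuous_id.prodMk continuous_const) fun _ => ⟨trivial, hx⟩
        ).intervalIntegrable 0 T), ϕ.map_zero_apply]
  refine ⟨intervalIntegrable_iff.2 hint.integral_prod_left, ?_⟩
  rw [intervalIntegral_integral_swap hint, integral_congr_ae (hρK.mono hftc), integral_sub]
  · exact (hη.mul (hΦ.continuous.comp (ϕ.continuous_toFun T)).continuousOn).integrable_of_ae_mem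
      hK hρK
  · exact (hη.mul hΦ.continuous.continuousOn).integrable_of_ae_mem hK hρK

theorem integral_fderiv_flow_add (hD : Continuous fun p : ℝ × E => fderiv ℝ (ϕ p.1) p.2)
    (hK : IsCompact K) (hρK : ∀ᵐ x ∂ρ, x ∈ K) (hL : Continuous L) {a b : E → E}
    (ha : ContinuousOn a K) (hb : ContinuousOn b K) (t : ℝ) :
    ∫ x, L (ϕ t x) (fderiv ℝ (ϕ t) x (a x + b x)) ∂ρ =
      ∫ x, L (ϕ t x) (fderiv ℝ (ϕ t) x (a x)) ∂ρ +
        ∫ x, L (ϕ t x) (fderiv ℝ (ϕ t) x (b x)) ∂ρ := by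
  have hint : ∀ c : E → E, ContinuousOn c K →
      Integrable (fun x => L (ϕ t x) (fderiv ℝ (ϕ t) x (c x))) ρ := fun c hc =>
    ((hL.comp (ϕ.continuous continuous_const continuous_id)).continuousOn.clm_apply
      ((hD.comp (continuous_const.prodMk continuous_id)).continuousOn.clm_apply hc)
      ).integrable_of_ae_mem hK hρK
  simp only [map_add]
  exact integral_add (hint a ha) (hint b hb)

end FlowIntegrals

theorem shadowing_unstable_decomposition_flow_general
    {E : Type*} [NormedAddCommGroup E] [NormedSpace ℝ E] [FiniteDimensional ℝ E]
    (F : E → E) (hF : ContDiff ℝ 2 F)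
    (φ : ℝ → E → E)
    (hφ0 : ∀ x : E, φ 0 x = x)
    (hφadd : ∀ (s t : ℝ) (x : E), φ (s + t) x = φ s (φ t x))
    (hφode : ∀ (x : E) (t : ℝ), HasDerivAt (fun s => φ s x) (F (φ t x)) t)
    (hφC1 : ∀ t : ℝ, ContDiff ℝ 1 (φ t))
    (hφD : Continuous fun p : ℝ × E => fderiv ℝ (φ p.1) p.2)
    (K : Set E) (hKc : IsCompact K) (hφK : ∀ t : ℝ, φ t '' K = K)
    (hFne : ∀ x ∈ K, F x ≠ 0)
    (Vs Vu Vc : E → Submodule ℝ E)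
    (C lam : ℝ) (hlam0 : 0 < lam) (hlam1 : lam < 1)
    (hyps : ∀ t : ℝ, 0 ≤ t → ∀ x ∈ K, ∀ v ∈ Vs x, ‖fderiv ℝ (φ t) x v‖ ≤ C * lam ^ t * ‖v‖)
    (hypu : ∀ t : ℝ, 0 ≤ t → ∀ x ∈ K, ∀ v ∈ Vu x, ‖fderiv ℝ (φ (-t)) x v‖ ≤ C * lam ^ t * ‖v‖)
    (Ps Pu Pc : E → E →L[ℝ] E)
    (hproj : ∀ x ∈ K, ∀ v : E, Ps x v ∈ Vs x ∧ Pu x v ∈ Vu x ∧ Pc x v ∈ Vc x ∧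
      Ps x v + Pu x v + Pc x v = v)
    [MeasurableSpace E] [BorelSpace E]
    (ρ : Measure E) [IsProbabilityMeasure ρ] (hρK : ρ K = 1)
    (hρinv : ∀ (t : ℝ) (A : Set E), MeasurableSet A → ρ (φ t ⁻¹' A) = ρ A)
    (hPsc : ContinuousOn Ps K) (hPuc : ContinuousOn Pu K) (hPcc : ContinuousOn Pc K)
    (X : E → E) (hXc : ContinuousOn X K)
    (Φ : E → ℝ) (hΦ : ContDiff ℝ 1 Φ)
    (η : E → ℝ) (hη : ∀ x ∈ K, Pc x (X x) = η x • F x)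
    (v : E → E)
    (hv : ∀ x ∈ K, v x =
      (∫ t in Ioi (0:ℝ), fderiv ℝ (φ t) (φ (-t) x) (Ps (φ (-t) x) (X (φ (-t) x)))) -
      ∫ t in Ioi (0:ℝ), fderiv ℝ (φ (-t)) (φ t x) (Pu (φ t x) (X (φ t x))))
    (hcorr : Tendsto (fun T : ℝ => ∫ x in K, η x * Φ (φ T x) ∂ρ) atTop
      (𝓝 ((∫ x in K, η x ∂ρ) * ∫ x in K, Φ x ∂ρ))) :
    ∃ I₁ I₂ : ℝ,
      Tendsto (fun T : ℝ => ∫ t in (0:ℝ)..T,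
          ∫ x in K, fderiv ℝ Φ (φ t x) (fderiv ℝ (φ t) x (Ps x (X x) + Pc x (X x))) ∂ρ)
        atTop (𝓝 I₁) ∧
      Tendsto (fun T : ℝ => ∫ t in (0:ℝ)..T,
          ∫ x in K, fderiv ℝ Φ (φ (-t) x) (fderiv ℝ (φ (-t)) x (Pu x (X x))) ∂ρ)
        atTop (𝓝 I₂) ∧
      (∫ x in K, fderiv ℝ Φ x (v x) ∂ρ) -
        (∫ x in K, η x * (Φ x - ∫ y in K, Φ y ∂ρ) ∂ρ) = I₁ - I₂ := by
  obtain ⟨ϕ, rfl⟩ : ∃ ϕ : Flow ℝ E, ⇑ϕ = φ :=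
    ⟨⟨φ, continuous_uncurry_of_continuous_fderiv
      (fun x => continuous_iff_continuousAt.2 fun t => (hφode x t).continuousAt)
      (fun t => (hφC1 t).differentiable one_ne_zero) hφD, hφadd, hφ0⟩, rfl⟩
  have hKae : ∀ᵐ x ∂ρ, x ∈ K :=
    mem_ae_iff.2 ((prob_compl_eq_zero_iff hKc.measurableSet).2 hρK)
  have hϕK : ∀ t, MapsTo (ϕ t) K K := fun t x hx => hφK t ▸ mem_image_of_mem _ hx
  have hρ : ∀ t, MeasurePreserving (ϕ t) ρ ρ := fun t =>
    ⟨(ϕ.continuous_toFun t).measurable, Measure.ext fun A hA => by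
      rw [Measure.map_apply (ϕ.continuous_toFun t).measurable hA, hρinv t A hA]⟩
  have hL := hΦ.continuous_fderiv one_ne_zero
  obtain ⟨hIs, hvs, hs⟩ := integral_apply_integral_fderiv_flow_neg hφD hKc hϕK hKae hρ hL
    (hPsc.clm_apply hXc) hlam0 hlam1 fun t ht x hx => hyps t ht x hx _ (hproj x hx (X x)).1
  obtain ⟨hIu, hvu, hu⟩ := integral_apply_integral_fderiv_flow_neg (ϕ := ϕ.reverse)
    (hφD.comp (continuous_neg.prodMap continuous_id)) hKc (fun t => hϕK (-t)) hKae
    (fun t => hρ (-t)) hL (hPuc.clm_apply hXc) hlam0 hlam1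
    fun t ht x hx => hypu t ht x hx _ (hproj x hx (X x)).2.1
  simp only [show ∀ t, ϕ.reverse t = ϕ (-t) from fun _ => rfl, neg_neg] at hIu hvu hu
  have hηc := continuousOn_of_eq_smul_of_ne_zero (hPcc.clm_apply hXc) hF.continuous.continuousOn
    hFne hη
  have hc := intervalIntegral_integral_fderiv_flow_of_eq_smul hφode
    (fun t => (hφC1 t).differentiable one_ne_zero) hφD hKc hKae hΦ (hPcc.clm_apply hXc) hηc hη
  rw [Measure.restrict_eq_self_of_ae_mem hKae] at hcorr ⊢
  have hsplit :=
    integral_fderiv_flow_add hφD hKc hKae hL (hPsc.clm_apply hXc) (hPcc.clm_apply hXc)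
  refine ⟨_, _, ((intervalIntegral_tendsto_integral_Ioi 0 hIs tendsto_id).add
    ((hcorr.sub_const _).congr fun T => (hc T).2.symm)).congr' ?_,
    intervalIntegral_tendsto_integral_Ioi 0 hIu tendsto_id, ?_⟩
  · filter_upwards [eventually_ge_atTop 0] with T hT
    dsimp only [id]
    rw [← intervalIntegral.integral_add ((intervalIntegrable_iff_integrableOn_Ioc_of_le hT).2
      (hIs.mono_set Ioc_subset_Ioi_self)) (hc T).1]
    simp_rw [hsplit]
  · have hηΦ : Integrable (fun x => η x * Φ x) ρ :=
      (hηc.mul hΦ.continuous.continuousOn).integrable_of_ae_mem hKc hKae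
    rw [integral_congr_ae (hKae.mono fun x hx => congrArg (fderiv ℝ Φ x) (hv x hx))]
    simp only [map_sub, mul_sub]
    rw [integral_sub hvs hvu, hs, hu,
      integral_sub hηΦ ((hηc.integrable_of_ae_mem hKc hKae).mul_const _), integral_mul_const]
    ring

theorem shadowing_unstable_decomposition_flow
    {E : Type*} [NormedAddCommGroup E] [NormedSpace ℝ E] [FiniteDimensional ℝ E]
    (F : E → E) (hF : ContDiff ℝ 2 F)
    (φ : ℝ → E → E)
    (hφ0 : ∀ x : E, φ 0 x = x)
    (hφadd : ∀ (s t : ℝ) (x : E), φ (s + t) x = φ s (φ t x))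
    (hφode : ∀ (x : E) (t : ℝ), HasDerivAt (fun s => φ s x) (F (φ t x)) t)
    (hφC1 : ∀ t : ℝ, ContDiff ℝ 1 (φ t))
    (hφD : Continuous fun p : ℝ × E => fderiv ℝ (φ p.1) p.2)
    (K : Set E) (hKc : IsCompact K) (hφK : ∀ t : ℝ, φ t '' K = K)
    (hFne : ∀ x ∈ K, F x ≠ 0)
    (Vs Vu Vc : E → Submodule ℝ E)
    (hVc : ∀ x ∈ K, Vc x = Submodule.span ℝ {F x})
    (hequivs : ∀ (t : ℝ), ∀ x ∈ K, (Vs x).map (fderiv ℝ (φ t) x : E →ₗ[ℝ] E) = Vs (φ t x))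
    (hequivu : ∀ (t : ℝ), ∀ x ∈ K, (Vu x).map (fderiv ℝ (φ t) x : E →ₗ[ℝ] E) = Vu (φ t x))
    (hequivc : ∀ (t : ℝ), ∀ x ∈ K, (Vc x).map (fderiv ℝ (φ t) x : E →ₗ[ℝ] E) = Vc (φ t x))
    (C lam : ℝ) (hC : 0 < C) (hlam0 : 0 < lam) (hlam1 : lam < 1)
    (hyps : ∀ t : ℝ, 0 ≤ t → ∀ x ∈ K, ∀ v ∈ Vs x, ‖fderiv ℝ (φ t) x v‖ ≤ C * lam ^ t * ‖v‖)
    (hypu : ∀ t : ℝ, 0 ≤ t → ∀ x ∈ K, ∀ v ∈ Vu x, ‖fderiv ℝ (φ (-t)) x v‖ ≤ C * lam ^ t * ‖v‖)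
    (Ps Pu Pc : E → E →L[ℝ] E)
    (hproj : ∀ x ∈ K, ∀ v : E, Ps x v ∈ Vs x ∧ Pu x v ∈ Vu x ∧ Pc x v ∈ Vc x ∧
      Ps x v + Pu x v + Pc x v = v)
    (hdirect : ∀ x ∈ K, ∀ vs ∈ Vs x, ∀ vu ∈ Vu x, ∀ vc ∈ Vc x,
      vs + vu + vc = 0 → vs = 0 ∧ vu = 0 ∧ vc = 0)
    (hPbdd : ∃ M : ℝ, ∀ x ∈ K, ‖Ps x‖ + ‖Pu x‖ + ‖Pc x‖ ≤ M)
    [MeasurableSpace E] [BorelSpace E]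
    (ρ : Measure E) [IsProbabilityMeasure ρ] (hρK : ρ K = 1)
    (hρinv : ∀ (t : ℝ) (A : Set E), MeasurableSet A → ρ (φ t ⁻¹' A) = ρ A)
    (hPsc : ContinuousOn Ps K) (hPuc : ContinuousOn Pu K) (hPcc : ContinuousOn Pc K)
    (X : E → E) (hXc : ContinuousOn X K)
    (Φ : E → ℝ) (hΦ : ContDiff ℝ 1 Φ)
    (η : E → ℝ) (hη : ∀ x ∈ K, Pc x (X x) = η x • F x)
    (v : E → E)
    (hv : ∀ x ∈ K, v x =
      (∫ t in Ioi (0:ℝ), fderiv ℝ (φ t) (φ (-t) x) (Ps (φ (-t) x) (X (φ (-t) x)))) -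
      ∫ t in Ioi (0:ℝ), fderiv ℝ (φ (-t)) (φ t x) (Pu (φ t x) (X (φ t x))))
    (hcorr : Tendsto (fun T : ℝ => ∫ x in K, η x * Φ (φ T x) ∂ρ) atTop
      (𝓝 ((∫ x in K, η x ∂ρ) * ∫ x in K, Φ x ∂ρ))) :
    ∃ I₁ I₂ : ℝ,
      Tendsto (fun T : ℝ => ∫ t in (0:ℝ)..T,
          ∫ x in K, fderiv ℝ Φ (φ t x) (fderiv ℝ (φ t) x (Ps x (X x) + Pc x (X x))) ∂ρ)
        atTop (𝓝 I₁) ∧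
      Tendsto (fun T : ℝ => ∫ t in (0:ℝ)..T,
          ∫ x in K, fderiv ℝ Φ (φ (-t) x) (fderiv ℝ (φ (-t)) x (Pu x (X x))) ∂ρ)
        atTop (𝓝 I₂) ∧
      (∫ x in K, fderiv ℝ Φ x (v x) ∂ρ) -
        (∫ x in K, η x * (Φ x - ∫ y in K, Φ y ∂ρ) ∂ρ) = I₁ - I₂ :=
  shadowing_unstable_decomposition_flow_general F hF φ hφ0 hφadd hφode hφC1 hφD K hKc hφK hFne Vs Vu
    Vc C lam hlam0 hlam1 hyps hypu Ps Pu Pc hproj ρ hρK hρinv hPsc hPuc hPcc X hXc Φ hΦ η hη v hv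
    hcorr
end
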